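/- arXiv:1704.00867 — 6 statements merged into one kernel-verified Lean document; each statement's English description precedes it below -/
import Mathlib

section
/- Let f : ℝ^l → ℝ^n with n ≤ l be strictly differentiable at a point z̄ with strict derivative ∇f(z̄). Then f is linearly open around z̄ if and only if the linear map ∇f(z̄) : ℝ^l → ℝ^n is surjective. -/
open Metric Set Filter

noncomputable section

/-- `ℝ^n` with the Euclidean norm. -/
abbrev Euc (n : ℕ) : Type := EuclideanSpace ℝ (Fin n)

/-- `ℝ^n × ℝ^m` identified with `ℝ^{n+m}` with its Euclidean norm. -/
abbrev EucProd (n m : ℕ) : Type := WithLp 2 (Euc n × Euc m)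

/-- Build a point of `ℝ^n × ℝ^m`. -/
def mkProd {n m : ℕ} (x : Euc n) (u : Euc m) : EucProd n m :=
  (WithLp.equiv 2 (Euc n × Euc m)).symm (x, u)

def pFst {n m : ℕ} (p : EucProd n m) : Euc n := ((WithLp.equiv 2 (Euc n × Euc m)) p).1

def pSnd {n m : ℕ} (p : EucProd n m) : Euc m := ((WithLp.equiv 2 (Euc n × Euc m)) p).2

/-- View a plain vector as a point of Euclidean space. -/
def vecE {n : ℕ} (v : Fin n → ℝ) : Euc n := WithLp.toLp 2 v

/-- `f` is linearly open around `z` with modulus `κ > 0`: on some neighborhood `U` of `z`,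
`B_{κ r}(f w) ⊆ f (B_r w)` whenever `w ∈ U`, `r > 0`, and `B_r w ⊆ U`. -/
def LinOpenWith {E F : Type*} [NormedAddCommGroup E] [NormedAddCommGroup F]
    (f : E → F) (z : E) (κ : ℝ) : Prop :=
  0 < κ ∧ ∃ U ∈ nhds z, ∀ w ∈ U, ∀ r : ℝ, 0 < r → closedBall w r ⊆ U →
      closedBall (f w) (κ * r) ⊆ f '' closedBall w r

/-- `f` is linearly open around `z` (with some modulus `κ > 0`). -/
def LinOpenAround {E F : Type*} [NormedAddCommGroup E] [NormedAddCommGroup F]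
    (f : E → F) (z : E) : Prop :=
  ∃ κ : ℝ, LinOpenWith f z κ

/-- `f` is `C¹` on an open neighborhood of `z`. -/
def C1Near {E F : Type*} [NormedAddCommGroup E] [NormedSpace ℝ E]
    [NormedAddCommGroup F] [NormedSpace ℝ F] (f : E → F) (z : E) : Prop :=
  ∃ U : Set E, IsOpen U ∧ z ∈ U ∧ ContDiffOn ℝ 1 f U

/-- The partial Jacobian matrix `A = ∂f/∂x(0,0)`. -/
def xJac {n m : ℕ} (f : EucProd n m → Euc n) : Matrix (Fin n) (Fin n) ℝ :=
  Matrix.of fun i j => fderiv ℝ f 0 (mkProd (EuclideanSpace.single j 1) 0) i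

/-- The partial Jacobian matrix `B = ∂f/∂u(0,0)`. -/
def uJac {n m : ℕ} (f : EucProd n m → Euc n) : Matrix (Fin n) (Fin m) ℝ :=
  Matrix.of fun i j => fderiv ℝ f 0 (mkProd 0 (EuclideanSpace.single j 1)) i

/-- The set of complex eigenvalues of a real matrix. -/
def specC {n : ℕ} (A : Matrix (Fin n) (Fin n) ℝ) : Set ℂ :=
  spectrum ℂ (A.map (Complex.ofReal : ℝ → ℂ))

/-- Local exponential stabilizability of `ẋ = f(x,u)` by stationary feedback laws
satisfying the regularity predicate `P`. -/
def ExpStabWith {n m : ℕ} (f : EucProd n m → Euc n) (P : (Euc n → Euc m) → Prop) : Prop :=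
  ∃ u : Euc n → Euc m, P u ∧ u 0 = 0 ∧
    ∃ α : ℝ, 0 < α ∧ ∃ M : ℝ, 0 < M ∧ ∃ δ : ℝ, 0 < δ ∧
      ∀ x₀ : Euc n, ‖x₀‖ < δ →
        ∃ x : ℝ → Euc n,
          (x 0 = x₀ ∧
            ∀ t ∈ Ici (0:ℝ), HasDerivWithinAt x (f (mkProd (x t) (u (x t)))) (Ici 0) t) ∧
          (∀ y : ℝ → Euc n,
            (y 0 = x₀ ∧
              ∀ t ∈ Ici (0:ℝ), HasDerivWithinAt y (f (mkProd (y t) (u (y t)))) (Ici 0) t) →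
            ∀ t ∈ Ici (0:ℝ), y t = x t) ∧
          ∀ t ∈ Ici (0:ℝ), ‖x t‖ ≤ M * Real.exp (-α * t) * ‖x₀‖

/-- Local exponential stabilizability by continuous stationary feedback laws. -/
def ExpStabCont {n m : ℕ} (f : EucProd n m → Euc n) : Prop :=
  ExpStabWith f Continuous

/-- Local exponential stabilizability by `C¹` stationary feedback laws. -/
def ExpStabC1 {n m : ℕ} (f : EucProd n m → Euc n) : Prop :=
  ExpStabWith f (fun u => ContDiff ℝ 1 u)

/-- Local asymptotic stabilizability of `ẋ = f(x,u)` by `C¹` stationary feedback laws. -/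
def AsympStabC1 {n m : ℕ} (f : EucProd n m → Euc n) : Prop :=
  ∃ u : Euc n → Euc m, ContDiff ℝ 1 u ∧ u 0 = 0 ∧
    ((∀ ε : ℝ, 0 < ε → ∃ δ : ℝ, 0 < δ ∧ ∀ x : ℝ → Euc n, ‖x 0‖ < δ →
        (∀ t ∈ Ici (0:ℝ), HasDerivWithinAt x (f (mkProd (x t) (u (x t)))) (Ici 0) t) →
        ∀ t ∈ Ici (0:ℝ), ‖x t‖ < ε) ∧
      ∃ δ₀ : ℝ, 0 < δ₀ ∧ ∀ x : ℝ → Euc n, ‖x 0‖ < δ₀ →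
        (∀ t ∈ Ici (0:ℝ), HasDerivWithinAt x (f (mkProd (x t) (u (x t)))) (Ici 0) t) →
        Tendsto x atTop (nhds 0))

/-- Local asymptotic stabilizability of the discrete-time system `x_{k+1} = f(x_k,u_k)`
by continuous stationary feedback laws. -/
def DiscAsympStabCont {n m : ℕ} (f : EucProd n m → Euc n) : Prop :=
  ∃ u : Euc n → Euc m, Continuous u ∧ u 0 = 0 ∧
    ((∀ ε : ℝ, 0 < ε → ∃ δ : ℝ, 0 < δ ∧ ∀ x₀ : Euc n, ‖x₀‖ < δ →
        ∀ k : ℕ, ‖(fun x => f (mkProd x (u x)))^[k] x₀‖ < ε) ∧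
      ∃ δ₀ : ℝ, 0 < δ₀ ∧ ∀ x₀ : Euc n, ‖x₀‖ < δ₀ →
        Tendsto (fun k => (fun x => f (mkProd x (u x)))^[k] x₀) atTop (nhds 0))

/-!
If `D` is surjective, the open mapping theorem gives it a nonlinear right inverse `σ`, and a map
approximating `D` on a neighbourhood to within `‖σ‖⁻¹ / 2` covers `B_{κ r}(f w)` from `B_r(w)`
with `κ = ‖σ‖⁻¹ / 2`. Conversely, if `f` is linearly open with modulus `κ` and `‖y‖ ≤ κ`, pick
`w` with `‖w - z‖ ≤ r` and `f w = f z + r • y`; as `r → 0`, `D (r⁻¹ • (w - z))` tends to `y`.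
So the closure of the range of `D` contains a ball, hence is everything, and a subspace of a
finite-dimensional space is closed.
-/

section

variable {E F : Type*} [NormedAddCommGroup E] [NormedAddCommGroup F]

theorem HasStrictFDerivAt.linOpenAround_of_surjective {𝕜 : Type*} [NontriviallyNormedField 𝕜]
    [NormedSpace 𝕜 E] [NormedSpace 𝕜 F] [CompleteSpace E] [CompleteSpace F]
    {f : E → F} {D : E →L[𝕜] F} {z : E} (hf : HasStrictFDerivAt f D z)
    (hD : Function.Surjective D) : LinOpenAround f z := by
  set σ := D.nonlinearRightInverseOfSurjective (LinearMap.range_eq_top.2 hD)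
  have hσ : 0 < σ.nnnorm := D.nonlinearRightInverseOfSurjective_nnnorm_pos _
  obtain ⟨U, hU, hfU⟩ := hf.approximates_deriv_on_nhds (c := σ.nnnorm⁻¹ / 2)
    (Or.inr (by positivity))
  refine ⟨(σ.nnnorm : ℝ)⁻¹ - (σ.nnnorm⁻¹ / 2 : NNReal), ?_, U, hU,
    fun w _ r hr hball => hfU.surjOn_closedBall_of_nonlinearRightInverse σ hr.le hball⟩
  push_cast
  linarith [inv_pos.2 (NNReal.coe_pos.2 hσ)]

variable [NormedSpace ℝ E] [NormedSpace ℝ F]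

theorem LinOpenWith.closedBall_subset_closure_range {f : E → F} {D : E →L[ℝ] F} {z : E} {κ : ℝ}
    (hf : LinOpenWith f z κ) (hD : HasFDerivAt f D z) :
    closedBall 0 κ ⊆ closure (range D) := by
  obtain ⟨-, U, hU, hopen⟩ := hf
  intro y hy
  rw [mem_closedBall_zero_iff] at hy
  refine Metric.mem_closure_iff.2 fun ε hε => ?_
  obtain ⟨r, hr, hrU⟩ := nhds_basis_closedBall.mem_iff.1
    (inter_mem hU (hD.isLittleO.def (half_pos hε)))
  have hyr : f z + r • y ∈ closedBall (f z) (κ * r) := by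
    rw [mem_closedBall_iff_norm, add_sub_cancel_left, norm_smul, Real.norm_of_nonneg hr.le,
      mul_comm]
    exact mul_le_mul_of_nonneg_right hy hr.le
  obtain ⟨w, hw, hfw⟩ := hopen z (mem_of_mem_nhds hU) r hr (fun x hx => (hrU hx).1) hyr
  refine ⟨D (r⁻¹ • (w - z)), mem_range_self _, ?_⟩
  have hwz : ‖w - z‖ ≤ r := mem_closedBall_iff_norm.1 hw
  calc dist y (D (r⁻¹ • (w - z))) = r⁻¹ * ‖f w - f z - D (w - z)‖ := by
        rw [dist_eq_norm, map_smul, hfw, add_sub_cancel_left, ← norm_smul_of_nonneg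
          (inv_nonneg.2 hr.le), smul_sub, inv_smul_smul₀ hr.ne']
    _ ≤ r⁻¹ * (ε / 2 * r) := by
        gcongr
        exact (hrU hw).2.trans (by gcongr)
    _ < ε := by
        rw [mul_comm, mul_assoc, mul_inv_cancel₀ hr.ne']
        linarith

theorem LinOpenAround.denseRange {f : E → F} {D : E →L[ℝ] F} {z : E}
    (hf : LinOpenAround f z) (hD : HasFDerivAt f D z) : DenseRange D := by
  obtain ⟨κ, hκ⟩ := hf
  set S := LinearMap.range (D : E →ₗ[ℝ] F)
  have hS : closedBall 0 κ ⊆ (S.topologicalClosure : Set F) :=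
    hκ.closedBall_subset_closure_range hD
  refine Submodule.dense_iff_topologicalClosure_eq_top.2
    (S.topologicalClosure.eq_top_of_nonempty_interior' ⟨0, ?_⟩)
  exact mem_interior_iff_mem_nhds.2 (mem_of_superset (closedBall_mem_nhds 0 hκ.1) hS)

theorem LinOpenAround.surjective [FiniteDimensional ℝ F] {f : E → F} {D : E →L[ℝ] F} {z : E}
    (hf : LinOpenAround f z) (hD : HasFDerivAt f D z) : Function.Surjective D := by
  have hclosed : IsClosed (range D) :=
    (LinearMap.range (D : E →ₗ[ℝ] F)).closed_of_finiteDimensional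
  rw [← range_eq_univ, ← hclosed.closure_eq]
  exact (hf.denseRange hD).closure_range

end

theorem linear_openness_iff_surjective_general {l n : ℕ}
    (f : Euc l → Euc n) (zbar : Euc l) (D : Euc l →L[ℝ] Euc n)
    (hf : HasStrictFDerivAt f D zbar) :
    LinOpenAround f zbar ↔ Function.Surjective D :=
  ⟨fun h => h.surjective hf.hasFDerivAt, hf.linOpenAround_of_surjective⟩

/-- `f : ℝ^l → ℝ^n` (`n ≤ l`) strictly differentiable at `z̄` is linearly open
around `z̄` iff its strict derivative is surjective. -/
theorem linear_openness_iff_surjective {l n : ℕ} (hn : n ≤ l)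
    (f : Euc l → Euc n) (zbar : Euc l) (D : Euc l →L[ℝ] Euc n)
    (hf : HasStrictFDerivAt f D zbar) :
    LinOpenAround f zbar ↔ Function.Surjective D :=
  linear_openness_iff_surjective_general f zbar D hf
end
end

section
/- Let f : ℝ^l → ℝ^n with n ≤ l be strictly differentiable at a point z̄ and suppose the strict derivative ∇f(z̄) : ℝ^l → ℝ^n is surjective. Then the exact covering bound of f around z̄ equals min{‖∇f(z̄)* v‖ : v ∈ ℝ^n, ‖v‖ = 1}, where ∇f(z̄)* : ℝ^n → ℝ^l is the adjoint (transpose) of ∇f(z̄) with respect to the Euclidean inner products; that is, the supremum of all moduli κ > 0 for which f is linearly open around z̄ with modulus κ equals min{‖∇f(z̄)* v‖ : ‖v‖ = 1}. -/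
open Metric Set Filter

noncomputable section

/-!
For a unit vector `v`, every modulus `κ` of linear openness is at most `‖D* v‖`: the point
`f z̄ + κ r v` has a preimage `x ∈ B_r(z̄)`, and `κ r = ⟪v, f x - f z̄⟫ ≈ ⟪D* v, x - z̄⟫ ≤ ‖D* v‖ r`.
Conversely let `c = min {‖D* v‖ : ‖v‖ = 1}`, positive since `D*` is injective. Then `D D*` is
invertible, `x = D* (D D*)⁻¹ y` solves `D x = y` with `c ‖x‖ ≤ ‖y‖` (as `‖x‖² = ⟪(D D*)⁻¹ y, y⟫`),
and Graves' theorem makes `f` linearly open around `z̄` with every modulus `κ < c`.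
-/

open scoped InnerProduct RealInnerProductSpace

namespace ContinuousLinearMap

section Normed

variable {E F : Type*} [NormedAddCommGroup E] [NormedSpace ℝ E]
  [NormedAddCommGroup F] [NormedSpace ℝ F]

/-- The minimum modulus `min {‖T v‖ : ‖v‖ = 1}` (junk value `sInf ∅ = 0` when `E` is trivial). -/
def minModulus (T : E →L[ℝ] F) : ℝ :=
  sInf ((fun v => ‖T v‖) '' {v | ‖v‖ = 1})

lemma minModulus_nonneg (T : E →L[ℝ] F) : 0 ≤ T.minModulus :=
  Real.sInf_nonneg <| by rintro _ ⟨v, -, rfl⟩; exact norm_nonneg _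

lemma minModulus_of_subsingleton [Subsingleton E] (T : E →L[ℝ] F) : T.minModulus = 0 := by
  have hsphere : {v : E | ‖v‖ = 1} = ∅ :=
    eq_empty_of_forall_notMem fun v hv => by simp [Subsingleton.elim v 0] at hv
  rw [minModulus, hsphere, image_empty, Real.sInf_empty]

lemma minModulus_mul_norm_le (T : E →L[ℝ] F) (v : E) : T.minModulus * ‖v‖ ≤ ‖T v‖ := by
  rcases eq_or_ne v 0 with rfl | hv
  · simp
  have hv' : 0 < ‖v‖ := norm_pos_iff.mpr hv
  have hunit : ‖‖v‖⁻¹ • v‖ = 1 := by rw [norm_smul, norm_inv, norm_norm, inv_mul_cancel₀ hv'.ne']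
  have hle : T.minModulus ≤ ‖v‖⁻¹ * ‖T v‖ := by
    refine csInf_le ⟨0, ?_⟩ ⟨_, hunit, ?_⟩
    · rintro _ ⟨u, -, rfl⟩; exact norm_nonneg _
    · show ‖T (‖v‖⁻¹ • v)‖ = _
      rw [map_smul, norm_smul, norm_inv, norm_norm]
  rwa [← le_div_iff₀ hv', div_eq_inv_mul]

lemma le_minModulus [Nontrivial E] {T : E →L[ℝ] F} {κ : ℝ} (h : ∀ v, ‖v‖ = 1 → κ ≤ ‖T v‖) :
    κ ≤ T.minModulus := by
  obtain ⟨v, hv⟩ := exists_norm_eq E zero_le_one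
  refine le_csInf ⟨_, v, hv, rfl⟩ ?_
  rintro _ ⟨u, hu, rfl⟩
  exact h u hu

lemma minModulus_pos [FiniteDimensional ℝ E] [Nontrivial E] {T : E →L[ℝ] F}
    (hT : Function.Injective T) : 0 < T.minModulus := by
  have hcpt : IsCompact ((fun v => ‖T v‖) '' {v : E | ‖v‖ = 1}) := by
    simpa only [← mem_sphere_zero_iff_norm, ofPred_mem_eq] using
      (isCompact_sphere (0 : E) 1).image (by fun_prop)
  obtain ⟨v, hv⟩ := exists_norm_eq E zero_le_one
  obtain ⟨u, hu, hmin⟩ := hcpt.sInf_mem ⟨_, v, hv, rfl⟩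
  rw [minModulus, ← hmin, norm_pos_iff, ← map_zero T, hT.ne_iff, ← norm_ne_zero_iff, hu]
  exact one_ne_zero

end Normed

section Inner

variable {E F : Type*} [NormedAddCommGroup E] [InnerProductSpace ℝ E] [CompleteSpace E]
  [NormedAddCommGroup F] [InnerProductSpace ℝ F] [CompleteSpace F]

lemma injective_adjoint_of_surjective {T : E →L[ℝ] F} (hT : Function.Surjective T) :
    Function.Injective (T†) := by
  rw [← coe_coe, ← LinearMap.ker_eq_bot, ← orthogonal_range, LinearMap.range_eq_top.mpr hT,
    Submodule.top_orthogonal_eq_bot]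

lemma exists_preimage_minModulus_adjoint_mul_norm_le [FiniteDimensional ℝ F] {T : E →L[ℝ] F}
    (hT : Function.Surjective T) (y : F) : ∃ x, T x = y ∧ (T†).minModulus * ‖x‖ ≤ ‖y‖ := by
  have hTT : Function.Surjective (T ∘ T†) :=
    LinearMap.surjective_of_injective (f := ((T ∘L T†) : F →ₗ[ℝ] F))
      ((self_comp_adjoint_injective_iff T).mpr (injective_adjoint_of_surjective hT))
  obtain ⟨w, hw⟩ := hTT y
  refine ⟨(T†) w, hw, ?_⟩
  have hsq : ‖(T†) w‖ ^ 2 ≤ ‖w‖ * ‖y‖ := by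
    rw [← real_inner_self_eq_norm_sq, adjoint_inner_left]
    exact hw ▸ real_inner_le_norm w y
  have hlow := minModulus_mul_norm_le (T†) w
  have hc := minModulus_nonneg (T†)
  rcases (norm_nonneg ((T†) w)).eq_or_lt with h0 | hpos
  · rw [← h0, mul_zero]; exact norm_nonneg y
  · refine le_of_mul_le_mul_right ?_ hpos
    nlinarith [norm_nonneg y]

end Inner

end ContinuousLinearMap

open ContinuousLinearMap

section LinearOpenness

variable {E F : Type*} [NormedAddCommGroup E] [NormedAddCommGroup F]

lemma setOf_linOpenWith_of_subsingleton [Subsingleton F] (f : E → F) (z : E) :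
    {κ | LinOpenWith f z κ} = Ioi 0 := by
  refine Subset.antisymm (fun κ hκ => hκ.1) fun κ hκ => ⟨hκ, univ, univ_mem, ?_⟩
  exact fun w _ r hr _ y _ => ⟨w, mem_closedBall_self hr.le, Subsingleton.elim _ _⟩

variable [NormedSpace ℝ E] [NormedSpace ℝ F]

/-- Graves' theorem. -/
lemma HasStrictFDerivAt.linOpenWith [CompleteSpace E] {f : E → F} {D : E →L[ℝ] F} {z : E}
    (hf : HasStrictFDerivAt f D z) {c κ : ℝ} (hD : ∀ y, ∃ x, D x = y ∧ c * ‖x‖ ≤ ‖y‖)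
    (hκ : 0 < κ) (hκc : κ < c) : LinOpenWith f z κ := by
  have hc : 0 < c := hκ.trans hκc
  choose g hDg hg using hD
  let Dinv : D.NonlinearRightInverse :=
    { toFun := g
      nnnorm := ⟨c⁻¹, by positivity⟩
      bound' := fun y => by
        show ‖g y‖ ≤ c⁻¹ * ‖y‖
        rw [← div_eq_inv_mul, le_div_iff₀ hc, mul_comm]
        exact hg y
      right_inv' := hDg }
  -- approximation constant `c - κ`, so that Graves' covering rate `c - (c - κ)` is exactly `κ`
  obtain ⟨s, hs, hfs⟩ :=
    hf.approximates_deriv_on_nhds (c := (c - κ).toNNReal) (Or.inr (by simpa using hκc))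
  have hrate : ((Dinv.nnnorm : ℝ)⁻¹ - (c - κ).toNNReal) = κ := by
    change c⁻¹⁻¹ - _ = κ
    rw [inv_inv, Real.coe_toNNReal _ (sub_nonneg.mpr hκc.le), sub_sub_cancel]
  obtain ⟨ρ, hρ, hρs⟩ := nhds_basis_closedBall.mem_iff.mp hs
  refine ⟨hκ, closedBall z ρ, closedBall_mem_nhds z hρ, fun w _ r hr hwr => ?_⟩
  simpa only [hrate, SurjOn] using
    hfs.surjOn_closedBall_of_nonlinearRightInverse Dinv hr.le (hwr.trans hρs)

end LinearOpenness

section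

variable {E F : Type*} [NormedAddCommGroup E] [InnerProductSpace ℝ E] [CompleteSpace E]
  [NormedAddCommGroup F] [InnerProductSpace ℝ F] [CompleteSpace F]

lemma LinOpenWith.le_norm_adjoint_apply {f : E → F} {D : E →L[ℝ] F} {z : E} {κ : ℝ}
    (hκ : LinOpenWith f z κ) (hf : HasFDerivAt f D z) {v : F} (hv : ‖v‖ = 1) :
    κ ≤ ‖(D†) v‖ := by
  obtain ⟨hκ0, U, hU, hcov⟩ := hκ
  refine le_of_forall_pos_le_add fun ε hε => ?_
  obtain ⟨r, hr, hrU⟩ :=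
    nhds_basis_closedBall.mem_iff.mp (inter_mem hU (hf.isLittleO.def hε))
  have hy : f z + (κ * r) • v ∈ closedBall (f z) (κ * r) := by
    rw [mem_closedBall_iff_norm, add_sub_cancel_left, norm_smul, hv, mul_one, Real.norm_of_nonneg]
    positivity
  obtain ⟨x, hx, hfx⟩ := hcov z (mem_of_mem_nhds hU) r hr (fun x hx => (hrU hx).1) hy
  have hxz : ‖x - z‖ ≤ r := mem_closedBall_iff_norm.mp hx
  have hrem : ‖f x - f z - D (x - z)‖ ≤ ε * ‖x - z‖ := (hrU hx).2
  have hbound : κ * r ≤ (‖(D†) v‖ + ε) * r :=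
    calc κ * r = ⟪v, f x - f z⟫ := by
          rw [hfx, add_sub_cancel_left, real_inner_smul_right, real_inner_self_eq_norm_sq, hv]
          ring
      _ = ⟪v, f x - f z - D (x - z)⟫ + ⟪(D†) v, x - z⟫ := by
          rw [adjoint_inner_left, ← inner_add_right, sub_add_cancel]
      _ ≤ ‖f x - f z - D (x - z)‖ + ‖(D†) v‖ * ‖x - z‖ := by
          gcongr
          · simpa [hv] using real_inner_le_norm v (f x - f z - D (x - z))
          · exact real_inner_le_norm _ _
      _ ≤ (‖(D†) v‖ + ε) * r := by nlinarith [norm_nonneg ((D†) v), norm_nonneg (x - z)]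
  exact le_of_mul_le_mul_right hbound hr

end

theorem exact_covering_bound_eq_general {l n : ℕ}
    (f : Euc l → Euc n) (zbar : Euc l) (D : Euc l →L[ℝ] Euc n)
    (hf : HasStrictFDerivAt f D zbar) (hsurj : Function.Surjective D) :
    sSup {κ : ℝ | LinOpenWith f zbar κ} =
      sInf ((fun v : Euc n => ‖ContinuousLinearMap.adjoint D v‖) '' {v : Euc n | ‖v‖ = 1}) := by
  change _ = (D†).minModulus
  rcases subsingleton_or_nontrivial (Euc n) with hn | hn
  · rw [setOf_linOpenWith_of_subsingleton, minModulus_of_subsingleton,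
      Real.sSup_of_not_bddAbove (not_bddAbove_Ioi 0)]
  have hc : 0 < (D†).minModulus := minModulus_pos (injective_adjoint_of_surjective hsurj)
  have hmoduli : Ioo 0 (D†).minModulus ⊆ {κ | LinOpenWith f zbar κ} := fun κ hκ =>
    hf.linOpenWith (exists_preimage_minModulus_adjoint_mul_norm_le hsurj) hκ.1 hκ.2
  have hbound : {κ | LinOpenWith f zbar κ} ⊆ Iic (D†).minModulus := fun κ hκ =>
    le_minModulus fun v hv => hκ.le_norm_adjoint_apply hf.hasFDerivAt hv
  exact ((isLUB_Ioo hc).of_subset_of_superset isLUB_Iic hmoduli hbound).csSup_eq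
    ((nonempty_Ioo.mpr hc).mono hmoduli)

/-- the exact covering bound of `f` around `z̄` equals
`min {‖D* v‖ : ‖v‖ = 1}` where `D*` is the adjoint of the (surjective) strict derivative. -/
theorem exact_covering_bound_eq {l n : ℕ} (hn : n ≤ l)
    (f : Euc l → Euc n) (zbar : Euc l) (D : Euc l →L[ℝ] Euc n)
    (hf : HasStrictFDerivAt f D zbar) (hsurj : Function.Surjective D) :
    sSup {κ : ℝ | LinOpenWith f zbar κ} =
      sInf ((fun v : Euc n => ‖ContinuousLinearMap.adjoint D v‖) '' {v : Euc n | ‖v‖ = 1}) :=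
  exact_covering_bound_eq_general f zbar D hf hsurj
end
end

section
/- Let f : ℝ^l → ℝ^n be continuous on a neighborhood of z̄ and linearly open around z̄ with modulus κ > 0, and let g : ℝ^l → ℝ^n be Lipschitz continuous on a neighborhood of z̄ with Lipschitz constant ν satisfying 0 ≤ ν < κ. Then for every κ' with 0 < κ' < κ − ν the sum f + g is linearly open around z̄ with modulus κ'. In particular, if f : ℝ^n × ℝ^m → ℝ^n is C¹ near (0,0) and linearly open around (0,0) with some modulus exceeding κ > 0, then for each ν ∈ [0, κ) the map f_ν(x,u) := f(x,u) − νx is linearly open around (0,0) with some modulus exceeding κ − ν. -/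
open Metric Set Filter

noncomputable section

/-! A Newton-type iteration in the spirit of Lyusternik–Graves. To solve `f x + g x = y`, apply
linear openness of `f` at the current point `x` with radius `‖f x + g x - y‖ / κ` to get `x'` with
`f x' = y - g x`; the new residual is `‖g x' - g x‖ ≤ ν ‖x' - x‖`, so residuals shrink by the
factor `ν / κ`. The quantity `(κ - ν) dist x w + residual x` does not increase along the iteration,
which keeps the iterates, and the balls on which openness is applied, inside `B_r(w)`. The iterates
form a Cauchy sequence and, by continuity, their limit solves the equation. -/

open scoped NNReal Topology

lemma div_add_le_of_mul_add_le {κ ν R d p : ℝ} (hν : 0 ≤ ν) (hνκ : ν < κ) (hp : 0 ≤ p)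
    (h : (κ - ν) * d + p ≤ (κ - ν) * R) : p / κ + d ≤ R := by
  have hκ : 0 < κ := hν.trans_lt hνκ
  have hdR : d ≤ R := le_of_mul_le_mul_left (by linarith) (sub_pos.mpr hνκ)
  rw [div_add' _ _ _ hκ.ne', div_le_iff₀ hκ]
  nlinarith

section Descent

variable {E : Type*} [PseudoMetricSpace E] {φ : E → ℝ} {T : E → E} {w : E} {κ ν R : ℝ}

theorem iterate_descent_invariant (hν : 0 ≤ ν) (hνκ : ν < κ) (hφ0 : ∀ z, 0 ≤ φ z)
    (hw : φ w ≤ (κ - ν) * R)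
    (hT : ∀ z, φ z / κ + dist z w ≤ R → κ * dist (T z) z ≤ φ z ∧ φ (T z) ≤ ν * dist (T z) z)
    (k : ℕ) :
    (κ - ν) * dist (T^[k] w) w + φ (T^[k] w) ≤ φ w ∧ φ (T^[k] w) ≤ (ν / κ) ^ k * φ w := by
  induction k with
  | zero => simp
  | succ k ih =>
    obtain ⟨hinv, hdecay⟩ := ih
    set z := T^[k] w
    rw [Function.iterate_succ_apply']
    obtain ⟨hmove, hφT⟩ := hT z (div_add_le_of_mul_add_le hν hνκ (hφ0 z) (hinv.trans hw))
    have hκ : 0 < κ := hν.trans_lt hνκ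
    constructor
    · linarith [mul_le_mul_of_nonneg_left (dist_triangle (T z) z w) (sub_nonneg.mpr hνκ.le)]
    · calc φ (T z) ≤ ν * dist (T z) z := hφT
        _ ≤ ν / κ * φ z := by
          rw [div_mul_eq_mul_div, le_div_iff₀ hκ, mul_right_comm, mul_assoc]
          exact mul_le_mul_of_nonneg_left hmove hν
        _ ≤ ν / κ * ((ν / κ) ^ k * φ w) := by gcongr
        _ = (ν / κ) ^ (k + 1) * φ w := by ring

theorem exists_mem_closedBall_eq_zero_of_descent [CompleteSpace E] (hν : 0 ≤ ν) (hνκ : ν < κ)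
    (hφ0 : ∀ z, 0 ≤ φ z) (hφ : ContinuousOn φ (closedBall w R)) (hw : φ w ≤ (κ - ν) * R)
    (step : ∀ z t, 0 < t → t + dist z w ≤ R → φ z ≤ κ * t →
      ∃ z', dist z' z ≤ t ∧ φ z' ≤ ν * dist z' z) :
    ∃ z ∈ closedBall w R, φ z = 0 := by
  have hκ : 0 < κ := hν.trans_lt hνκ
  have hstep (z : E) :
      ∃ z', φ z / κ + dist z w ≤ R → κ * dist z' z ≤ φ z ∧ φ z' ≤ ν * dist z' z := by
    rcases (hφ0 z).eq_or_lt with hz | hz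
    · exact ⟨z, fun _ => by simp [← hz]⟩
    by_cases hzR : φ z / κ + dist z w ≤ R
    · obtain ⟨z', hz'z, hφz'⟩ :=
        step z (φ z / κ) (div_pos hz hκ) hzR (mul_div_cancel₀ _ hκ.ne').ge
      exact ⟨z', fun _ => ⟨(le_div_iff₀' hκ).mp hz'z, hφz'⟩⟩
    · exact ⟨z, fun h => absurd h hzR⟩
  choose T hT using hstep
  have hdesc := iterate_descent_invariant hν hνκ hφ0 hw hT
  have hregion (k : ℕ) : φ (T^[k] w) / κ + dist (T^[k] w) w ≤ R :=
    div_add_le_of_mul_add_le hν hνκ (hφ0 _) ((hdesc k).1.trans hw)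
  have hmem (k : ℕ) : T^[k] w ∈ closedBall w R :=
    (le_add_of_nonneg_left (div_nonneg (hφ0 _) hκ.le)).trans (hregion k)
  have hq : ν / κ < 1 := (div_lt_one hκ).mpr hνκ
  have hcauchy : CauchySeq fun k => T^[k] w := by
    refine cauchySeq_of_le_geometric (ν / κ) (φ w / κ) hq fun k => ?_
    rw [dist_comm, Function.iterate_succ_apply', div_mul_eq_mul_div, le_div_iff₀' hκ]
    exact (hT _ (hregion k)).1.trans (by linarith [(hdesc k).2])
  obtain ⟨z, hz⟩ := cauchySeq_tendsto_of_complete hcauchy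
  have hzR : z ∈ closedBall w R := isClosed_closedBall.mem_of_tendsto hz (.of_forall hmem)
  have hφz : Tendsto (fun k => φ (T^[k] w)) atTop (𝓝 (φ z)) :=
    (hφ z hzR).tendsto.comp (tendsto_nhdsWithin_iff.mpr ⟨hz, .of_forall hmem⟩)
  have hφ_zero : Tendsto (fun k => φ (T^[k] w)) atTop (𝓝 0) := by
    refine squeeze_zero (fun k => hφ0 _) (fun k => (hdesc k).2) ?_
    simpa using (tendsto_pow_atTop_nhds_zero_of_lt_one (div_nonneg hν hκ.le) hq).mul_const (φ w)
  exact ⟨z, hzR, tendsto_nhds_unique hφz hφ_zero⟩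

end Descent

theorem LinOpenWith.add_of_lipschitzOnWith {E F : Type*} [NormedAddCommGroup E] [CompleteSpace E]
    [NormedAddCommGroup F] {f g : E → F} {z : E} {κ κ' : ℝ} {ν : ℝ≥0}
    (hf : LinOpenWith f z κ) (hfc : ∃ U ∈ 𝓝 z, ContinuousOn f U)
    (hg : ∃ U ∈ 𝓝 z, LipschitzOnWith ν g U) (hκ' : 0 < κ') (hκ'κ : κ' < κ - ν) :
    LinOpenWith (fun w => f w + g w) z κ' := by
  obtain ⟨-, Uf, hUf, hopen⟩ := hf
  obtain ⟨Uc, hUc, hcont⟩ := hfc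
  obtain ⟨Ug, hUg, hlip⟩ := hg
  refine ⟨hκ', Uf ∩ Uc ∩ Ug, inter_mem (inter_mem hUf hUc) hUg, ?_⟩
  rintro w - r hr hball y hy
  have hB : ∀ x ∈ closedBall w r, x ∈ Uf ∧ x ∈ Uc ∧ x ∈ Ug := fun x hx =>
    ⟨(hball hx).1.1, (hball hx).1.2, (hball hx).2⟩
  have hfB : ContinuousOn f (closedBall w r) := hcont.mono fun x hx => (hB x hx).2.1
  have hgB : ContinuousOn g (closedBall w r) := hlip.continuousOn.mono fun x hx => (hB x hx).2.2
  have hstep (x : E) (t : ℝ) (ht : 0 < t) (htx : t + dist x w ≤ r)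
      (hφx : dist y (f x + g x) ≤ κ * t) :
      ∃ x', dist x' x ≤ t ∧ dist y (f x' + g x') ≤ ν * dist x' x := by
    have hsub : closedBall x t ⊆ closedBall w r := closedBall_subset_closedBall' htx
    have hxB := hB x (hsub (mem_closedBall_self ht.le))
    have hyx : y - g x ∈ closedBall (f x) (κ * t) := by
      rwa [mem_closedBall, dist_eq_norm, sub_sub, add_comm, ← dist_eq_norm]
    obtain ⟨x', hx't, hfx'⟩ := hopen x hxB.1 t ht (hsub.trans fun _ h => (hB _ h).1) hyx
    refine ⟨x', mem_closedBall.mp hx't, ?_⟩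
    rw [hfx', sub_add_eq_add_sub, add_sub_assoc, dist_self_add_right, ← dist_eq_norm]
    exact hlip.dist_le_mul _ (hB _ (hsub hx't)).2.2 _ hxB.2.2
  obtain ⟨x, hx, hxy⟩ := exists_mem_closedBall_eq_zero_of_descent
    (φ := fun x => dist y (f x + g x)) (w := w) (κ := κ)
    ν.coe_nonneg (by linarith) (fun _ => dist_nonneg) (by fun_prop)
    ((mem_closedBall.mp hy).trans (mul_le_mul_of_nonneg_right hκ'κ.le hr.le)) hstep
  exact ⟨x, hx, (dist_eq_zero.mp hxy).symm⟩

lemma lipschitzWith_pFst {n m : ℕ} : LipschitzWith 1 (pFst : EucProd n m → Euc n) :=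
  LipschitzWith.of_dist_le_mul fun p q => by
    rw [NNReal.coe_one, one_mul]
    exact WithLp.dist_fst_le p q

theorem linear_openness_lipschitz_perturbation_general {l n : ℕ}
    (f g : Euc l → Euc n) (zbar : Euc l) (κ ν : ℝ)
    (hfc : ∃ U ∈ nhds zbar, ContinuousOn f U)
    (hfo : LinOpenWith f zbar κ)
    (hν0 : 0 ≤ ν)
    (hg : ∃ U ∈ nhds zbar, LipschitzOnWith (Real.toNNReal ν) g U) :
    (∀ κ' : ℝ, 0 < κ' → κ' < κ - ν → LinOpenWith (fun w => f w + g w) zbar κ') ∧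
    (∀ (n' m' : ℕ) (F : EucProd n' m' → Euc n') (κ₀ : ℝ), 0 < κ₀ →
      C1Near F 0 → (∃ κ₁ > κ₀, LinOpenWith F 0 κ₁) →
      ∀ ν' : ℝ, 0 ≤ ν' → ν' < κ₀ →
        ∃ κ₂ > κ₀ - ν', LinOpenWith (fun p => F p - ν' • pFst p) 0 κ₂) := by
  refine ⟨fun κ' hκ' hκ'κ => hfo.add_of_lipschitzOnWith hfc hg hκ' ?_, ?_⟩
  · rwa [Real.coe_toNNReal ν hν0]
  rintro n' m' F κ₀ - ⟨V, hV, hV0, hFV⟩ ⟨κ₁, hκ₁, hF⟩ ν' hν' hν'κ₀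
  have hG := ((lipschitzWith_smul ν').comp (lipschitzWith_pFst (n := n') (m := m'))).neg
  have hν'norm : ((‖ν'‖₊ * 1 : ℝ≥0) : ℝ) = ν' := by simp [abs_of_nonneg hν']
  refine ⟨(κ₀ + κ₁) / 2 - ν', by linarith, ?_⟩
  convert hF.add_of_lipschitzOnWith (κ' := (κ₀ + κ₁) / 2 - ν')
    ⟨V, hV.mem_nhds hV0, hFV.continuousOn⟩ ⟨univ, univ_mem, hG.lipschitzOnWith⟩ (by linarith)
    (by rw [hν'norm]; linarith) using 2
  simp [sub_eq_add_neg]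

/-- stability of linear openness under Lipschitzian perturbations; in particular,
for a `C¹` map `f` linearly open around `(0,0)` with modulus exceeding `κ`, the map
`f_ν(x,u) = f(x,u) - ν x` is linearly open around `(0,0)` with modulus exceeding `κ - ν`. -/
theorem linear_openness_lipschitz_perturbation {l n : ℕ}
    (f g : Euc l → Euc n) (zbar : Euc l) (κ ν : ℝ)
    (hfc : ∃ U ∈ nhds zbar, ContinuousOn f U)
    (hfo : LinOpenWith f zbar κ)
    (hν0 : 0 ≤ ν) (hνκ : ν < κ)
    (hg : ∃ U ∈ nhds zbar, LipschitzOnWith (Real.toNNReal ν) g U) :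
    (∀ κ' : ℝ, 0 < κ' → κ' < κ - ν → LinOpenWith (fun w => f w + g w) zbar κ') ∧
    (∀ (n' m' : ℕ) (F : EucProd n' m' → Euc n') (κ₀ : ℝ), 0 < κ₀ →
      C1Near F 0 → (∃ κ₁ > κ₀, LinOpenWith F 0 κ₁) →
      ∀ ν' : ℝ, 0 ≤ ν' → ν' < κ₀ →
        ∃ κ₂ > κ₀ - ν', LinOpenWith (fun p => F p - ν' • pFst p) 0 κ₂) :=
  linear_openness_lipschitz_perturbation_general f g zbar κ ν hfc hfo hν0 hg
end
end

section
/- Let f : ℝ^n × ℝ^m → ℝ^n be C¹ on an open neighborhood of (0,0) with f(0,0) = 0. If the control system ẋ = f(x,u) is locally exponentially stabilizable by means of continuously differentiable stationary feedback laws, then f is linearly open around (0,0). -/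
open Metric Set Filter

noncomputable section

/-!
If `Df(0)` were not onto, a unit vector `p` orthogonal to its range would make
`⟪p, f(x, u(x))⟫ = o(‖x‖)` along the closed loop. On an exponentially decaying trajectory
started at `x₀ = c p`, the derivative of `⟪p, x(t)⟫` is then at most `ε M c e^{-αt}`, and
integrating from `0` to `∞` gives `c = ⟪p, x₀⟫ ≤ ε M c / α` for every `ε > 0`, which is absurd.
A strictly differentiable map with surjective derivative is linearly open (Graves' theorem).
-/

open scoped Topology

theorem HasStrictFDerivAt.linOpenAround {E F : Type*} [NormedAddCommGroup E] [NormedSpace ℝ E]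
    [CompleteSpace E] [NormedAddCommGroup F] [NormedSpace ℝ F] [CompleteSpace F]
    {f : E → F} {z : E} {L : E →L[ℝ] F} (hf : HasStrictFDerivAt f L z)
    (hL : LinearMap.range (L : E →ₗ[ℝ] F) = ⊤) : LinOpenAround f z := by
  obtain ⟨g, hg⟩ := L.exists_nonlinearRightInverse_of_surjective hL
  obtain ⟨s, hs, happrox⟩ :=
    hf.approximates_deriv_on_nhds (c := g.nnnorm⁻¹ / 2) (Or.inr (by positivity))
  obtain ⟨R, hR, hball⟩ := Metric.mem_nhds_iff.1 hs
  refine ⟨(g.nnnorm : ℝ)⁻¹ / 2, by positivity, ball z R, ball_mem_nhds _ hR,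
    fun w _ r hr hsub => ?_⟩
  have hsurj := (happrox.mono_set (hsub.trans hball)).surjOn_closedBall_of_nonlinearRightInverse
    g hr.le subset_rfl
  have hκ : (g.nnnorm : ℝ)⁻¹ - ↑(g.nnnorm⁻¹ / 2) = (g.nnnorm : ℝ)⁻¹ / 2 := by push_cast; ring
  rwa [hκ] at hsurj

theorem norm_le_div_of_norm_deriv_le_exp {E : Type*} [NormedAddCommGroup E] [NormedSpace ℝ E]
    {f f' : ℝ → E} {C α : ℝ} (hα : 0 < α)
    (hf : ∀ t ∈ Ici (0:ℝ), HasDerivWithinAt f (f' t) (Ici 0) t)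
    (hf' : ∀ t ∈ Ici (0:ℝ), ‖f' t‖ ≤ C * Real.exp (-α * t))
    (hlim : Tendsto f atTop (𝓝 0)) : ‖f 0‖ ≤ C / α := by
  have hC : 0 ≤ C := by simpa using (norm_nonneg _).trans (hf' 0 self_mem_Ici)
  set B : ℝ → ℝ := fun t => C / α * (1 - Real.exp (-α * t))
  have hB : ∀ t, HasDerivAt B (C * Real.exp (-α * t)) t := fun t =>
    ((((hasDerivAt_id t).const_mul (-α)).exp.const_sub 1).const_mul (C / α)).congr_deriv
      (by field_simp; simp)
  have hincrement : ∀ T ≥ 0, ‖f T - f 0‖ ≤ C / α := fun T hT => calc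
    ‖f T - f 0‖ ≤ B T :=
      image_norm_le_of_norm_deriv_right_le_deriv_boundary' (f := fun t => f t - f 0)
        (fun t ht => ((hf t ht.1).continuousWithinAt.mono Icc_subset_Ici_self).sub
          continuousWithinAt_const)
        (fun t ht => ((hf t ht.1).mono (Ici_subset_Ici.2 ht.1)).sub_const _)
        (by simp [B]) (fun t _ => (hB t).continuousAt.continuousWithinAt)
        (fun t _ => (hB t).hasDerivWithinAt) (fun t ht => hf' t ht.1) ⟨hT, le_rfl⟩
    _ ≤ C / α := mul_le_of_le_one_right (by positivity) (by simp [Real.exp_nonneg])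
  simpa using le_of_tendsto (hlim.sub_const (f 0)).norm
    ((eventually_ge_atTop 0).mono hincrement)

theorem norm_map_initial_le_of_expDecay {E F : Type*} [NormedAddCommGroup E] [NormedSpace ℝ E]
    [NormedAddCommGroup F] [NormedSpace ℝ F] {g : E → E} {x : ℝ → E} {ℓ : E →L[ℝ] F}
    {α M ρ ε : ℝ} (hα : 0 < α) (hM : 0 ≤ M) (hε : 0 ≤ ε)
    (hx : ∀ t ∈ Ici (0:ℝ), HasDerivWithinAt x (g (x t)) (Ici 0) t)
    (hdecay : ∀ t ∈ Ici (0:ℝ), ‖x t‖ ≤ M * Real.exp (-α * t) * ‖x 0‖)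
    (hρ : M * ‖x 0‖ ≤ ρ) (hg : ∀ y, ‖y‖ ≤ ρ → ‖ℓ (g y)‖ ≤ ε * ‖y‖) :
    ‖ℓ (x 0)‖ ≤ ε * M * ‖x 0‖ / α := by
  have hexp : Tendsto (fun t => Real.exp (-α * t)) atTop (𝓝 0) :=
    (Real.tendsto_exp_neg_atTop_nhds_zero.comp (tendsto_id.const_mul_atTop hα)).congr
      fun t => by simp [neg_mul]
  have hx_lim : Tendsto x atTop (𝓝 0) := by
    refine squeeze_zero_norm' ((eventually_ge_atTop 0).mono hdecay) ?_
    simpa using (hexp.const_mul M).mul_const ‖x 0‖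
  refine norm_le_div_of_norm_deriv_le_exp hα
    (fun t ht => ℓ.hasFDerivAt.comp_hasDerivWithinAt t (hx t ht)) (fun t ht => ?_)
    (by simpa using (ℓ.continuous.tendsto 0).comp hx_lim)
  have hexp_le : Real.exp (-α * t) ≤ 1 := Real.exp_le_one_iff.2 (by nlinarith [mem_Ici.1 ht])
  have hxt : ‖x t‖ ≤ ρ := (hdecay t ht).trans <| hρ.trans' <| by
    gcongr
    exact mul_le_of_le_one_right hM hexp_le
  calc ‖ℓ (g (x t))‖ ≤ ε * ‖x t‖ := hg _ hxt
    _ ≤ ε * (M * Real.exp (-α * t) * ‖x 0‖) := by gcongr; exact hdecay t ht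
    _ = ε * M * ‖x 0‖ * Real.exp (-α * t) := by ring

def LocallyExpStable {E : Type*} [NormedAddCommGroup E] [NormedSpace ℝ E] (g : E → E) :
    Prop :=
  ∃ α > 0, ∃ M > 0, ∃ δ > 0, ∀ x₀ : E, ‖x₀‖ < δ → ∃ x : ℝ → E, x 0 = x₀ ∧
    (∀ t ∈ Ici (0:ℝ), HasDerivWithinAt x (g (x t)) (Ici 0) t) ∧
    ∀ t ∈ Ici (0:ℝ), ‖x t‖ ≤ M * Real.exp (-α * t) * ‖x₀‖

theorem LocallyExpStable.eq_zero_of_isLittleO {E F : Type*} [NormedAddCommGroup E]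
    [NormedSpace ℝ E] [NormedAddCommGroup F] [NormedSpace ℝ F] {g : E → E}
    (hg : LocallyExpStable g) {ℓ : E →L[ℝ] F} (hℓ : (fun y => ℓ (g y)) =o[𝓝 0] fun y => y) :
    ℓ = 0 := by
  obtain ⟨α, hα, M, hM, δ, hδ, hsol⟩ := hg
  have hsmall : ∀ ε > 0, ‖ℓ‖ ≤ ε * M / α := by
    intro ε hε
    obtain ⟨ρ, hρ, hball⟩ := Metric.eventually_nhds_iff.1 (hℓ.def hε)
    refine ℓ.opNorm_le_bound (by positivity) fun v => ?_
    -- both sides are homogeneous in `v`: test on a multiple `c • v` small enough to stay in range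
    obtain ⟨c, hc, hcδ, hcρ⟩ : ∃ c > 0, c * ‖v‖ < δ ∧ M * (c * ‖v‖) < ρ := by
      have hscale : Tendsto (fun c : ℝ => c * ‖v‖) (𝓝[>] 0) (𝓝 0) :=
        ((continuous_mul_const ‖v‖).tendsto' 0 0 (zero_mul _)).mono_left nhdsWithin_le_nhds
      exact (eventually_mem_nhdsWithin.and ((hscale.eventually (gt_mem_nhds hδ)).and
        ((hscale.const_mul M).eventually (gt_mem_nhds (by simpa using hρ))))).exists
    have hnorm : ‖c • v‖ = c * ‖v‖ := by rw [norm_smul, Real.norm_of_nonneg hc.le]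
    obtain ⟨x, hx0, hxd, hxb⟩ := hsol (c • v) (by rwa [hnorm])
    rw [← hx0] at hxb
    have hxρ : M * ‖x 0‖ < ρ := by rwa [hx0, hnorm]
    have hest := norm_map_initial_le_of_expDecay hα hM.le hε.le hxd hxb le_rfl
      fun y hy => by simpa using hball (y := y) (by rw [dist_zero_right]; linarith)
    rw [hx0, map_smul, norm_smul, Real.norm_of_nonneg hc.le, hnorm] at hest
    exact le_of_mul_le_mul_left (hest.trans_eq (by ring)) hc
  refine norm_le_zero_iff.1 (le_of_forall_pos_le_add fun η hη => ?_)
  calc ‖ℓ‖ ≤ η * α / M * M / α := hsmall _ (by positivity)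
    _ = 0 + η := by field_simp; ring

theorem ExpStabWith.exists_locallyExpStable {n m : ℕ} {f : EucProd n m → Euc n}
    {P : (Euc n → Euc m) → Prop} (h : ExpStabWith f P) :
    ∃ u, P u ∧ u 0 = 0 ∧ LocallyExpStable fun x => f (mkProd x (u x)) := by
  obtain ⟨u, hu, hu0, α, hα, M, hM, δ, hδ, hsol⟩ := h
  refine ⟨u, hu, hu0, α, hα, M, hM, δ, hδ, fun x₀ hx₀ => ?_⟩
  obtain ⟨x, ⟨hx0, hxd⟩, -, hxb⟩ := hsol x₀ hx₀
  exact ⟨x, hx0, hxd, hxb⟩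

theorem DifferentiableAt.mkProd {E : Type*} [NormedAddCommGroup E] [NormedSpace ℝ E]
    {n m : ℕ} {v : E → Euc n} {u : E → Euc m} {x : E} (hv : DifferentiableAt ℝ v x)
    (hu : DifferentiableAt ℝ u x) : DifferentiableAt ℝ (fun y => mkProd (v y) (u y)) x :=
  (WithLp.prodContinuousLinearEquiv 2 ℝ (Euc n) (Euc m)).symm.differentiableAt.comp x
    (hv.prodMk hu)

theorem HasFDerivAt.isLittleO_comp_of_comp_eq_zero {E P F G : Type*} [NormedAddCommGroup E]
    [NormedSpace ℝ E] [NormedAddCommGroup P] [NormedSpace ℝ P] [NormedAddCommGroup F]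
    [NormedSpace ℝ F] [NormedAddCommGroup G] [NormedSpace ℝ G] {f : P → F} {L : P →L[ℝ] F}
    {j : E → P} {ℓ : F →L[ℝ] G} {z : P} (hf : HasFDerivAt f L z) (hj : DifferentiableAt ℝ j 0)
    (hjz : j 0 = z) (hfz : f z = 0) (hℓ : ℓ ∘L L = 0) :
    (fun x => ℓ (f (j x))) =o[𝓝 0] fun x => x := by
  subst hjz
  have hd := ℓ.hasFDerivAt.comp 0 (hf.comp 0 hj.hasFDerivAt)
  rw [← ContinuousLinearMap.comp_assoc, hℓ, ContinuousLinearMap.zero_comp] at hd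
  simpa [hfz] using hd.isLittleO

theorem range_fderiv_eq_top_of_expStabC1 {n m : ℕ} {f : EucProd n m → Euc n}
    (hf : DifferentiableAt ℝ f 0) (hf0 : f 0 = 0) (hstab : ExpStabC1 f) :
    LinearMap.range (fderiv ℝ f 0 : EucProd n m →ₗ[ℝ] Euc n) = ⊤ := by
  obtain ⟨u, hu, hu0, hstable⟩ := hstab.exists_locallyExpStable
  rw [← Submodule.orthogonal_eq_bot_iff, Submodule.eq_bot_iff]
  intro p hp
  have hℓ : innerSL ℝ p ∘L fderiv ℝ f 0 = 0 := by
    ext v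
    simpa [real_inner_comm] using (Submodule.mem_orthogonal _ p).1 hp _ ⟨v, rfl⟩
  have hj0 : mkProd (0 : Euc n) (u 0) = 0 := by simp [hu0, mkProd]
  have hlo := hf.hasFDerivAt.isLittleO_comp_of_comp_eq_zero (j := fun x => mkProd x (u x))
    (differentiableAt_id.mkProd (hu.differentiable one_ne_zero 0)) hj0 hf0 hℓ
  simpa using congr($(hstable.eq_zero_of_isLittleO hlo) p)

/-- local exponential stabilizability by `C¹` stationary feedback laws implies
linear openness of `f` around `(0,0)`. -/
theorem linear_openness_of_exp_stabilizable {n m : ℕ} (f : EucProd n m → Euc n)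
    (hf : C1Near f 0) (hf0 : f 0 = 0)
    (hstab : ExpStabC1 f) :
    LinOpenAround f 0 := by
  obtain ⟨U, hU, h0U, hfU⟩ := hf
  have hstrict : HasStrictFDerivAt f (fderiv ℝ f 0) 0 :=
    (hfU.contDiffAt (hU.mem_nhds h0U)).hasStrictFDerivAt one_ne_zero
  exact hstrict.linOpenAround
    (range_fderiv_eq_top_of_expStabC1 hstrict.differentiableAt hf0 hstab)
end
end

section
/- Let g₀, g₁, …, g_m : ℝ^n → ℝ^n be C¹ on an open neighborhood of 0 with g₀(0) = 0, и define f(x,u) := g₀(x) + Σ_{i=1}^m g_i(x) u_i. Suppose there is a linear subspace W ⊆ ℝ^n of dimension d < n such that g_i(x) ∈ W for all x in a neighborhood of 0 and all i = 0, 1, …, m. Then the control system ẋ = f(x,u) cannot be locally exponentially stabilized by means of continuously differentiable stationary feedback laws. -/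
open Metric Set Filter

noncomputable section

/-! Near the origin every closed-loop velocity lies in the proper subspace `W`, so for `v ∈ Wᗮ`
the quantity `⟪v, x t⟫` is conserved along trajectories that stay near the origin (exponential
stability keeps those started close enough there). Starting at a small nonzero `x₀ ∈ Wᗮ` gives
`‖x₀‖² = ⟪x₀, x t⟫ ≤ ‖x₀‖ ‖x t‖`, and the exponential decay of `x t` forces `x₀ = 0`. -/

open scoped InnerProductSpace

section Orthogonal

variable {E : Type*} [NormedAddCommGroup E] [InnerProductSpace ℝ E]

theorem Submodule.exists_mem_orthogonal_norm_eq [FiniteDimensional ℝ E] {W : Submodule ℝ E}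
    (hW : Module.finrank ℝ W < Module.finrank ℝ E) {r : ℝ} (hr : 0 ≤ r) :
    ∃ v ∈ Wᗮ, ‖v‖ = r := by
  have hWtop : W ≠ ⊤ := by
    rintro rfl
    exact hW.ne (finrank_top ℝ E)
  have : Nontrivial Wᗮ :=
    Submodule.nontrivial_iff_ne_bot.mpr (mt Submodule.orthogonal_eq_bot_iff.mp hWtop)
  obtain ⟨v, hv⟩ := exists_norm_eq Wᗮ hr
  exact ⟨v, v.2, hv⟩

theorem inner_eq_of_hasDerivWithinAt_mem_orthogonal {W : Submodule ℝ E} {v : E} (hv : v ∈ Wᗮ)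
    {x x' : ℝ → E} {a : ℝ} (hx : ∀ t ∈ Ici a, HasDerivWithinAt x (x' t) (Ici a) t)
    (hx'W : ∀ t ∈ Ici a, x' t ∈ W) {t : ℝ} (ht : a ≤ t) : ⟪v, x t⟫_ℝ = ⟪v, x a⟫_ℝ := by
  have hcont : ContinuousOn (fun s => ⟪v, x s⟫_ℝ) (Icc a t) := fun s hs =>
    (continuousWithinAt_const.inner (hx s hs.1).continuousWithinAt).mono Icc_subset_Ici_self
  refine constant_of_has_deriv_right_zero hcont (fun s hs => ?_) t ⟨ht, le_rfl⟩
  have hderiv := (hasDerivWithinAt_const s (Ici a) v).inner ℝ (hx s hs.1)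
  rw [Submodule.inner_left_of_mem_orthogonal (hx'W s hs.1) hv, inner_zero_left, add_zero]
    at hderiv
  exact hderiv.mono (Ici_subset_Ici.mpr hs.1)

end Orthogonal

theorem nonpos_of_le_mul_exp_neg {c K α : ℝ} (hα : 0 < α)
    (h : ∀ t ≥ 0, c ≤ K * Real.exp (-α * t)) : c ≤ 0 := by
  have hdecay : Tendsto (fun t => K * Real.exp (-α * t)) atTop (nhds 0) := by
    simpa using (Real.tendsto_exp_atBot.comp
      (tendsto_id.const_mul_atTop_of_neg (neg_neg_iff_pos.mpr hα))).const_mul K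
  exact ge_of_tendsto hdecay (eventually_ge_atTop 0 |>.mono h)

theorem not_expStabWith_of_eventually_mem_submodule {n m : ℕ} {f : EucProd n m → Euc n}
    {P : (Euc n → Euc m) → Prop} {W : Submodule ℝ (Euc n)} (hWn : Module.finrank ℝ W < n)
    (hfW : ∀ᶠ x in nhds (0 : Euc n), ∀ u, f (mkProd x u) ∈ W) :
    ¬ ExpStabWith f P := by
  rintro ⟨u, -, -, α, hα, M, hM, δ, hδ, hstab⟩
  obtain ⟨U, hU, hUW⟩ := hfW.exists_mem
  obtain ⟨ρ, hρ, hball⟩ := Metric.nhds_basis_ball.mem_iff.mp hU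
  have hmin : 0 < min δ (ρ / M) := by positivity
  obtain ⟨r, hr, hrδ, hrρ⟩ : ∃ r, 0 < r ∧ r < δ ∧ r < ρ / M :=
    ⟨_, half_pos hmin, (half_lt_self hmin).trans_le (min_le_left _ _),
      (half_lt_self hmin).trans_le (min_le_right _ _)⟩
  obtain ⟨x₀, hx₀W, hx₀r⟩ := W.exists_mem_orthogonal_norm_eq (by simpa using hWn) hr.le
  obtain ⟨x, ⟨hx0, hx⟩, -, hdecay⟩ := hstab x₀ (hx₀r.trans_lt hrδ)
  have hxU : ∀ t ∈ Ici (0 : ℝ), x t ∈ U := fun t ht => hball <| mem_ball_zero_iff.mpr <|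
    calc ‖x t‖ ≤ M * Real.exp (-α * t) * ‖x₀‖ := hdecay t ht
      _ ≤ M * 1 * r := by
        rw [hx₀r]; gcongr; exact Real.exp_le_one_iff.mpr (by nlinarith [mem_Ici.mp ht])
      _ < ρ := by rw [mul_one]; exact (lt_div_iff₀' hM).mp hrρ
  have hconst : ∀ t ∈ Ici (0 : ℝ), ⟪x₀, x t⟫_ℝ = ‖x₀‖ ^ 2 := fun t ht => by
    rw [inner_eq_of_hasDerivWithinAt_mem_orthogonal hx₀W hx (fun s hs => hUW _ (hxU s hs) _) ht,
      hx0, real_inner_self_eq_norm_sq]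
  have hnorm_sq : ‖x₀‖ ^ 2 ≤ 0 := nonpos_of_le_mul_exp_neg hα fun t ht =>
    calc ‖x₀‖ ^ 2 = ⟪x₀, x t⟫_ℝ := (hconst t ht).symm
      _ ≤ ‖x₀‖ * ‖x t‖ := real_inner_le_norm _ _
      _ ≤ ‖x₀‖ * (M * Real.exp (-α * t) * ‖x₀‖) := by gcongr; exact hdecay t ht
      _ = ‖x₀‖ * M * ‖x₀‖ * Real.exp (-α * t) := by ring
  rw [hx₀r] at hnorm_sq
  exact hnorm_sq.not_gt (by positivity)

theorem not_exp_stabilizable_of_low_dim_general {n m d : ℕ} (g : Fin (m + 1) → Euc n → Euc n)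
    (W : Submodule ℝ (Euc n)) (hWd : Module.finrank ℝ W = d) (hdn : d < n)
    (hgW : ∃ U ∈ nhds (0 : Euc n), ∀ x ∈ U, ∀ i, g i x ∈ W) :
    ¬ ExpStabC1 (fun p : EucProd n m =>
        g 0 (pFst p) + ∑ i : Fin m, (pSnd p) i • g i.succ (pFst p)) := by
  refine not_expStabWith_of_eventually_mem_submodule (hWd ▸ hdn) <|
    (eventually_iff_exists_mem.mpr hgW).mono fun x hx u => ?_
  exact W.add_mem (hx 0) (W.sum_mem fun i _ => W.smul_mem _ (hx i.succ))

/-- if all the vector fields `g₀, g₁, …, g_m` take values in a subspace `W` of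
dimension `d < n` near the origin, then `ẋ = g₀(x) + ∑ gᵢ(x) uᵢ` cannot be locally
exponentially stabilized by `C¹` stationary feedback laws. -/
theorem not_exp_stabilizable_of_low_dim {n m d : ℕ} (g : Fin (m + 1) → Euc n → Euc n)
    (hg : ∀ i, C1Near (g i) (0 : Euc n)) (hg0 : g 0 0 = 0)
    (W : Submodule ℝ (Euc n)) (hWd : Module.finrank ℝ W = d) (hdn : d < n)
    (hgW : ∃ U ∈ nhds (0 : Euc n), ∀ x ∈ U, ∀ i, g i x ∈ W) :
    ¬ ExpStabC1 (fun p : EucProd n m =>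
        g 0 (pFst p) + ∑ i : Fin m, (pSnd p) i • g i.succ (pFst p)) :=
  not_exp_stabilizable_of_low_dim_general g W hWd hdn hgW
end
end

section
/- Let g₁, …, g_m : ℝ^n → ℝ^n be C¹ on an open neighborhood of 0 such that the vectors g₁(0), …, g_m(0) are linearly independent in ℝ^n, and define f(x,u) := Σ_{i=1}^m g_i(x) u_i. Then the control system ẋ = f(x,u) can be locally exponentially stabilized by means of continuously differentiable stationary feedback laws if and only if m = n. -/
open Metric Set Filter

noncomputable section

/-! If `m < n`, choose a unit vector `w` orthogonal to `g₁(0), …, g_m(0)`. For a `C¹` feedback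
with `u(0) = 0`, the `w`-component of the closed-loop field `∑ uᵢ(x) gᵢ(x)` is `o(‖x‖)`, so a
solution starting at `s • w` keeps its `w`-component above `3s/4` up to a fixed time `T`, while
exponential decay forces `‖x(T)‖ < s/4`. If `m = n`, the map `B(x) : c ↦ ∑ cᵢ gᵢ(x)` is invertible
near `0`, and `u(x) = -φ(x) B(x)⁻¹ x` with a bump function `φ` equal to `1` near `0` turns the
closed loop into `ẋ = -φ(x) x`: a globally Lipschitz field whose solutions near `0` are
`e^{-t} x₀`. -/

open scoped RealInnerProductSpace Topology

theorem C1Near.contDiffAt {E F : Type*} [NormedAddCommGroup E] [NormedSpace ℝ E]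
    [NormedAddCommGroup F] [NormedSpace ℝ F] {f : E → F} {z : E} (h : C1Near f z) :
    ContDiffAt ℝ 1 f z :=
  let ⟨_, hU, hz, hf⟩ := h
  hf.contDiffAt (hU.mem_nhds hz)

section Forward

variable {E : Type*} [NormedAddCommGroup E] [InnerProductSpace ℝ E]

theorem exists_norm_eq_one_forall_inner_eq_zero [FiniteDimensional ℝ E] {ι : Type*} [Fintype ι]
    (v : ι → E) (hv : Fintype.card ι < Module.finrank ℝ E) :
    ∃ w : E, ‖w‖ = 1 ∧ ∀ i, ⟪w, v i⟫ = 0 := by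
  set K := Submodule.span ℝ (Set.range v)
  have hK : K ≠ ⊤ := fun h => by
    have : Module.finrank ℝ K ≤ _ := finrank_range_le_card (R := ℝ) v
    rw [h, finrank_top] at this
    omega
  obtain ⟨w, hwK, hw⟩ := (Submodule.ne_bot_iff _).1 (mt Submodule.orthogonal_eq_bot_iff.1 hK)
  refine ⟨‖w‖⁻¹ • w, norm_smul_inv_norm hw, fun i => ?_⟩
  rw [real_inner_smul_left, real_inner_comm,
    (Submodule.mem_orthogonal K w).1 hwK _ (Submodule.subset_span ⟨i, rfl⟩), mul_zero]

theorem isLittleO_inner_sum_smul {ι : Type*} [Fintype ι] {u : E → EuclideanSpace ℝ ι}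
    {g : ι → E → E} {w : E} (hu : DifferentiableAt ℝ u 0) (hu0 : u 0 = 0)
    (hg : ∀ i, ContinuousAt (g i) 0) (hw : ∀ i, ⟪w, g i 0⟫ = 0) :
    (fun y => ⟪w, ∑ i, u y i • g i y⟫) =o[𝓝 0] fun y : E => y := by
  have hu' : u =O[𝓝 0] fun y : E => y := by simpa [hu0] using hu.isBigO_sub
  simp only [inner_sum, real_inner_smul_right]
  refine Asymptotics.IsLittleO.fun_sum fun i _ => ?_
  have hui : (fun y => u y i) =O[𝓝 0] fun y => ‖y‖ :=
    ((EuclideanSpace.proj i : EuclideanSpace ℝ ι →L[ℝ] ℝ).isBigO_comp u (𝓝 0)).trans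
      hu'.norm_right
  have hgi : (fun y => ⟪w, g i y⟫) =o[𝓝 0] fun _ => (1 : ℝ) :=
    (Asymptotics.isLittleO_one_iff ℝ).2 (by
      simpa [hw i] using ((continuousAt_const (y := w)).inner (𝕜 := ℝ) (hg i)).tendsto)
  simpa using Asymptotics.isLittleO_norm_right.1 (by simpa using hui.mul_isLittleO hgi)

def HasExpStableSolutions (F : E → E) : Prop :=
  ∃ α > 0, ∃ M > 0, ∃ δ > 0, ∀ x₀ : E, ‖x₀‖ < δ → ∃ x : ℝ → E, x 0 = x₀ ∧
    (∀ t ∈ Ici (0 : ℝ), HasDerivWithinAt x (F (x t)) (Ici 0) t) ∧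
    ∀ t ∈ Ici (0 : ℝ), ‖x t‖ ≤ M * Real.exp (-α * t) * ‖x₀‖

theorem abs_inner_sub_le_of_hasDerivWithinAt {F : E → E} {x : ℝ → E} {w : E} {T c : ℝ}
    (hT : 0 ≤ T) (hx : ∀ t ∈ Ici (0 : ℝ), HasDerivWithinAt x (F (x t)) (Ici 0) t)
    (hc : ∀ t ∈ Icc 0 T, |⟪w, F (x t)⟫| ≤ c) :
    |⟪w, x T⟫ - ⟪w, x 0⟫| ≤ c * T := by
  have hd : ∀ t ∈ Icc 0 T, HasDerivWithinAt (fun t => ⟪w, x t⟫) ⟪w, F (x t)⟫ (Icc 0 T) t :=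
    fun t ht => (innerSL ℝ w).hasFDerivAt.comp_hasDerivWithinAt t
      ((hx t ht.1).mono Icc_subset_Ici_self)
  simpa [abs_of_nonneg hT] using (convex_Icc (0 : ℝ) T).norm_image_sub_le_of_norm_hasDerivWithin_le
    hd hc (left_mem_Icc.2 hT) (right_mem_Icc.2 hT)

theorem not_hasExpStableSolutions_of_inner_isLittleO {F : E → E} {w : E} (hw : ‖w‖ = 1)
    (hF : (fun y => ⟪w, F y⟫) =o[𝓝 0] fun y => y) : ¬ HasExpStableSolutions F := by
  rintro ⟨α, hα, M, hM, δ, hδ, hsol⟩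
  obtain ⟨T, hT, hMT⟩ : ∃ T > 0, M * Real.exp (-α * T) < 1 / 4 := by
    have : Tendsto (fun t => M * Real.exp (-(α * t))) atTop (𝓝 (M * 0)) :=
      (Real.tendsto_exp_neg_atTop_nhds_zero.comp (tendsto_id.const_mul_atTop hα)).const_mul M
    simpa using ((eventually_gt_atTop 0).and (this.eventually (gt_mem_nhds (by norm_num)))).exists
  set ε := 1 / (4 * M * T)
  obtain ⟨r, hr, hsmall⟩ := Metric.eventually_nhds_iff.1 (hF.def (by positivity : 0 < ε))
  set s := min (δ / 2) (r / (2 * M))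
  have hs : 0 < s := by positivity
  have hsδ : s < δ := (min_le_left _ _).trans_lt (half_lt_self hδ)
  have hsr : M * s < r := by
    calc M * s ≤ M * (r / (2 * M)) := by gcongr; exact min_le_right _ _
      _ < r := by field_simp; linarith
  have hx₀ : ‖s • w‖ = s := by rw [norm_smul, hw, Real.norm_of_nonneg hs.le, mul_one]
  obtain ⟨x, hx0, hx, hdecay⟩ := hsol (s • w) (by rwa [hx₀])
  have hbound : ∀ t ∈ Ici (0 : ℝ), ‖x t‖ ≤ M * s := fun t ht =>
    calc ‖x t‖ ≤ M * Real.exp (-α * t) * s := hx₀ ▸ hdecay t ht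
      _ ≤ M * 1 * s := by gcongr; exact Real.exp_le_one_iff.2 (by nlinarith [mem_Ici.1 ht])
      _ = M * s := by ring
  have hdrift := abs_inner_sub_le_of_hasDerivWithinAt (c := ε * (M * s)) hT.le hx
    fun t ht => by
      have := hsmall (by simpa using (hbound t ht.1).trans_lt hsr)
      simpa using this.trans (by gcongr; exact hbound t ht.1)
  have hstart : ⟪w, x 0⟫ = s := by
    rw [hx0, real_inner_smul_right, real_inner_self_eq_norm_sq, hw]; ring
  have hend : |⟪w, x T⟫| < s / 4 := by
    calc |⟪w, x T⟫| ≤ ‖x T‖ := by simpa [hw] using abs_real_inner_le_norm w (x T)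
      _ ≤ M * Real.exp (-α * T) * s := hx₀ ▸ hdecay T hT.le
      _ < 1 / 4 * s := by gcongr
      _ = s / 4 := by ring
  have : ε * (M * s) * T = s / 4 := by simp only [ε]; field_simp
  rw [hstart, this] at hdrift
  linarith [abs_le.1 hdrift, abs_lt.1 hend]

end Forward

theorem exists_hasExpStableSolutions_of_expStabWith {n m : ℕ} {f : EucProd n m → Euc n}
    {P : (Euc n → Euc m) → Prop} (h : ExpStabWith f P) :
    ∃ u, P u ∧ u 0 = 0 ∧ HasExpStableSolutions fun y => f (mkProd y (u y)) := by
  obtain ⟨u, hu, hu0, α, hα, M, hM, δ, hδ, hsol⟩ := h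
  refine ⟨u, hu, hu0, α, hα, M, hM, δ, hδ, fun x₀ hx₀ => ?_⟩
  obtain ⟨x, ⟨hx0, hx⟩, -, hdecay⟩ := hsol x₀ hx₀
  exact ⟨x, hx0, hx, hdecay⟩

theorem eq_of_expStabC1_sum_smul {n m : ℕ} (g : Fin m → Euc n → Euc n)
    (hg : ∀ i, ContinuousAt (g i) 0) (hind : LinearIndependent ℝ fun i => g i 0)
    (h : ExpStabC1 fun p : EucProd n m => ∑ i, pSnd p i • g i (pFst p)) : m = n := by
  have hle : m ≤ n := by simpa using hind.fintype_card_le_finrank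
  refine hle.eq_of_not_lt fun hlt => ?_
  obtain ⟨w, hw, hwg⟩ := exists_norm_eq_one_forall_inner_eq_zero (fun i => g i 0) (by simpa)
  obtain ⟨u, hu, hu0, hstab⟩ := exists_hasExpStableSolutions_of_expStabWith h
  exact not_hasExpStableSolutions_of_inner_isLittleO hw
    (isLittleO_inner_sum_smul (hu.differentiable one_ne_zero 0) hu0 hg hwg) hstab

section Backward

variable {E F : Type*} [NormedAddCommGroup E] [NormedSpace ℝ E]
  [NormedAddCommGroup F] [NormedSpace ℝ F]

theorem contDiff_smul_of_tsupport {n : WithTop ℕ∞} {φ : E → ℝ} {v : E → F}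
    (hφ : ContDiff ℝ n φ) (hv : ∀ y ∈ tsupport φ, ContDiffAt ℝ n v y) :
    ContDiff ℝ n fun y => φ y • v y := by
  refine contDiff_iff_contDiffAt.2 fun y => ?_
  by_cases hy : y ∈ tsupport φ
  · exact hφ.contDiffAt.smul (hv y hy)
  · refine contDiffAt_const (c := (0 : F)).congr_of_eventuallyEq ?_
    filter_upwards [notMem_tsupport_iff_eventuallyEq.1 hy] with z hz
    simp [hz]

theorem hasDerivAt_exp_neg_smul (x₀ : F) (t : ℝ) :
    HasDerivAt (fun t => Real.exp (-t) • x₀) (-(Real.exp (-t) • x₀)) t := by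
  simpa using ((Real.hasDerivAt_exp (-t)).comp t (hasDerivAt_neg t)).smul_const x₀

theorem eqOn_Ici_of_lipschitzWith {K : NNReal} {V : F → F} (hV : LipschitzWith K V)
    {x y : ℝ → F} (hx : ∀ t ∈ Ici (0 : ℝ), HasDerivWithinAt x (V (x t)) (Ici 0) t)
    (hy : ∀ t ∈ Ici (0 : ℝ), HasDerivWithinAt y (V (y t)) (Ici 0) t) (h0 : x 0 = y 0) :
    EqOn x y (Ici 0) := fun _ ht =>
  ODE_solution_unique (v := fun _ => V) (fun _ => hV)
    (fun τ hτ => (hx τ hτ.1).continuousWithinAt.mono Icc_subset_Ici_self)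
    (fun τ hτ => (hx τ hτ.1).mono (Ici_subset_Ici.2 hτ.1))
    (fun τ hτ => (hy τ hτ.1).continuousWithinAt.mono Icc_subset_Ici_self)
    (fun τ hτ => (hy τ hτ.1).mono (Ici_subset_Ici.2 hτ.1)) h0 ⟨ht, le_rfl⟩

end Backward

theorem expStabWith_of_eq_neg_bump_smul {n m : ℕ} {f : EucProd n m → Euc n}
    {P : (Euc n → Euc m) → Prop} {u : Euc n → Euc m} (hu : P u) (hu0 : u 0 = 0)
    (φ : ContDiffBump (0 : Euc n)) (hf : ∀ y, f (mkProd y (u y)) = -(φ y • y)) :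
    ExpStabWith f P := by
  obtain ⟨K, hK⟩ := ContDiff.lipschitzWith_of_hasCompactSupport
    φ.hasCompactSupport.smul_right.neg (φ.contDiff.smul contDiff_id).neg one_ne_zero
  refine ⟨u, hu, hu0, 1, one_pos, 1, one_pos, φ.rIn, φ.rIn_pos, fun x₀ hx₀ => ?_⟩
  have hnorm : ∀ t, ‖Real.exp (-t) • x₀‖ = Real.exp (-t) * ‖x₀‖ := fun t => by
    rw [norm_smul, Real.norm_of_nonneg (Real.exp_pos _).le]
  have hsol : ∀ t ∈ Ici (0 : ℝ), HasDerivWithinAt (fun t => Real.exp (-t) • x₀)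
      (f (mkProd (Real.exp (-t) • x₀) (u (Real.exp (-t) • x₀)))) (Ici 0) t := fun t ht => by
    have hin : φ (Real.exp (-t) • x₀) = 1 := φ.one_of_mem_closedBall <| by
      rw [mem_closedBall_zero_iff, hnorm]
      refine (mul_le_of_le_one_left (norm_nonneg _) ?_).trans hx₀.le
      exact Real.exp_le_one_iff.2 (by simpa using ht)
    rw [hf, hin, one_smul]
    exact (hasDerivAt_exp_neg_smul x₀ t).hasDerivWithinAt
  refine ⟨_, ⟨by simp, hsol⟩, fun y ⟨hy0, hy⟩ => ?_, fun t _ => by simp [hnorm]⟩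
  refine eqOn_Ici_of_lipschitzWith hK (V := fun y => -(φ y • y)) ?_ ?_ (by simp [hy0])
  · simpa only [hf] using hy
  · simpa only [hf] using hsol

theorem exists_contDiffAt_sum_smul_eq {m : ℕ} (g : Fin m → Euc m → Euc m)
    (hg : ∀ i, ContDiffAt ℝ 1 (g i) 0) (hind : LinearIndependent ℝ fun i => g i 0) :
    ∃ v : Euc m → Euc m, v 0 = 0 ∧ ContDiffAt ℝ 1 v 0 ∧
      ∀ᶠ y in 𝓝 0, ∑ i, v y i • g i y = y := by
  let B : Euc m → (Euc m →L[ℝ] Euc m) := fun y => ∑ i, (EuclideanSpace.proj i).smulRight (g i y)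
  have hB : ∀ y c, B y c = ∑ i, c i • g i y := fun y c => by simp [B]
  have hBC : ContDiffAt ℝ 1 B 0 := ContDiffAt.sum fun i _ =>
    (ContinuousLinearMap.smulRightL ℝ (Euc m) (Euc m)
      (EuclideanSpace.proj i)).contDiff.comp_contDiffAt 0 (hg i)
  have hB0 : IsUnit (B 0) := by
    have hinj : Function.Injective (B 0) := (injective_iff_map_eq_zero _).2 fun c hc => by
      ext i
      exact Fintype.linearIndependent_iff.1 hind c (by rwa [← hB]) i
    exact ContinuousLinearMap.isUnit_iff_bijective.2
      ⟨hinj, (LinearMap.injective_iff_surjective (f := (B 0 : Euc m →ₗ[ℝ] Euc m))).1 hinj⟩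
  refine ⟨fun y => Ring.inverse (B y) y, map_zero _, ?_, ?_⟩
  · have := contDiffAt_ringInverse (n := 1) ℝ hB0.unit
    rw [hB0.unit_spec] at this
    exact (this.comp 0 hBC).clm_apply contDiffAt_id
  · filter_upwards [hBC.continuousAt.eventually (Units.isOpen.mem_nhds hB0)] with y hy
    exact (hB y _).symm.trans
      (congrArg (fun T : Euc m →L[ℝ] Euc m => T y) (Ring.mul_inverse_cancel _ hy))

theorem expStabC1_sum_smul {m : ℕ} (g : Fin m → Euc m → Euc m)
    (hg : ∀ i, ContDiffAt ℝ 1 (g i) 0) (hind : LinearIndependent ℝ fun i => g i 0) :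
    ExpStabC1 fun p : EucProd m m => ∑ i, pSnd p i • g i (pFst p) := by
  obtain ⟨v, hv0, hv, hvg⟩ := exists_contDiffAt_sum_smul_eq g hg hind
  obtain ⟨ρ, hρ, hρv⟩ := Metric.nhds_basis_closedBall.eventually_iff.1
    ((hv.eventually (by simp)).and hvg)
  let φ : ContDiffBump (0 : Euc m) := ⟨ρ / 2, ρ, half_pos hρ, half_lt_self hρ⟩
  have hφ : tsupport φ = closedBall 0 ρ := φ.tsupport_eq
  refine expStabWith_of_eq_neg_bump_smul (u := fun y => -(φ y • v y)) ?_ (by simp [hv0]) φ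
    fun y => ?_
  · exact (contDiff_smul_of_tsupport φ.contDiff fun y hy => (hρv (hφ ▸ hy)).1).neg
  · show ∑ i, (-(φ y • v y)) i • g i y = -(φ y • y)
    by_cases hy : y ∈ closedBall 0 ρ
    · calc ∑ i, (-(φ y • v y)) i • g i y = -(φ y • ∑ i, v y i • g i y) := by
            simp [Finset.smul_sum, smul_smul]
        _ = -(φ y • y) := by rw [(hρv hy).2]
    · simp [image_eq_zero_of_notMem_tsupport (hφ ▸ hy : y ∉ tsupport φ)]

/-- with `g₁(0), …, g_m(0)` linearly independent, the system
`ẋ = ∑ gᵢ(x) uᵢ` is locally exponentially stabilizable by `C¹` stationary feedback laws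
iff `m = n`. -/
theorem exp_stabilizable_iff_square {n m : ℕ} (g : Fin m → Euc n → Euc n)
    (hg : ∀ i, C1Near (g i) (0 : Euc n))
    (hind : LinearIndependent ℝ (fun i => g i 0)) :
    (ExpStabC1 (fun p : EucProd n m => ∑ i : Fin m, (pSnd p) i • g i (pFst p)) ↔ m = n) := by
  constructor
  · exact eq_of_expStabC1_sum_smul g (fun i => (hg i).contDiffAt.continuousAt) hind
  · rintro rfl
    exact expStabC1_sum_smul g (fun i => (hg i).contDiffAt) hind
end
end
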